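/- Let f, g : ZMod 6 → ℚ satisfy: f̂(0) = ĝ(0), f̂(k) = ĝ(k) = 0 for k = 2, 3, 4, and |f̂(1)| = |ĝ(1)|. Then for every n with 1 ≤ n ≤ 5 and all characters χ₁,...,χ_n of ZMod 6 with χ₁···χ_n = 1, we have f̂(χ₁)···f̂(χ_n) = ĝ(χ₁)···ĝ(χ_n); i.e., f and g share all autocorrelation data through order 5. -/

import Mathlib

open Finset Real Complex

/-- The discrete Fourier transform of `f : ZMod 6 → ℚ` at frequency `k`. -/
noncomputable def dft (f : ZMod 6 → ℚ) (k : ZMod 6) : ℂ :=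
  ∑ x : ZMod 6, (f x : ℂ) * Complex.exp (-2 * π * Complex.I * (k.val : ℂ) * (x.val : ℂ) / 6)

lemma dft_five_eq_conj (f : ZMod 6 → ℚ) : dft f 5 = starRingEnd ℂ (dft f 1) := by
  unfold dft
  rw [map_sum]
  apply Finset.sum_congr rfl
  intro x _
  rw [map_mul]
  have hc : (starRingEnd ℂ) ((f x : ℂ)) = (f x : ℂ) := by
    simp [Complex.conj_ofReal]
  rw [hc, ← Complex.exp_conj]
  congr 1
  have h1 : ((1 : ZMod 6).val : ℂ) = 1 := by
    norm_num [show (1 : ZMod 6).val = 1 from rfl]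
  have h5 : ((5 : ZMod 6).val : ℂ) = 5 := by
    norm_num [show (5 : ZMod 6).val = 5 from rfl]
  rw [h1, h5]
  have hconj : (starRingEnd ℂ) (-2 * π * Complex.I * (1 : ℂ) * (x.val : ℂ) / 6)
      = 2 * π * Complex.I * 1 * (x.val : ℂ) / 6 := by
    simp only [map_div₀, map_mul, map_neg, map_ofNat, Complex.conj_I,
      Complex.conj_natCast, Complex.conj_ofReal, map_one]
    ring
  rw [hconj]
  have key : (-2 * π * Complex.I * 5 * (x.val : ℂ) / 6)
      = (2 * π * Complex.I * 1 * (x.val : ℂ) / 6) + ((-(x.val : ℤ) : ℤ) : ℂ) * (2 * π * Complex.I) := by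
    push_cast; ring
  rw [key, Complex.exp_add, Complex.exp_int_mul_two_pi_mul_I, mul_one]

lemma key_prod (f g : ZMod 6 → ℚ)
    (habs : ‖dft f 1‖ = ‖dft g 1‖) :
    dft f 1 * dft f 5 = dft g 1 * dft g 5 := by
  rw [dft_five_eq_conj, dft_five_eq_conj, Complex.mul_conj, Complex.mul_conj,
    ← Complex.sq_norm, ← Complex.sq_norm, habs]

lemma prod_partition {M : Type*} [CommMonoid M] {n : ℕ} (k : Fin n → ZMod 6)
    (h : ∀ i, k i = 0 ∨ k i = 1 ∨ k i = 5) (F : ZMod 6 → M) :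
    ∏ i, F (k i) = F 0 ^ (univ.filter (fun i => k i = 0)).card
      * F 1 ^ (univ.filter (fun i => k i = 1)).card
      * F 5 ^ (univ.filter (fun i => k i = 5)).card := by
  have hU : (univ : Finset (Fin n)) =
      ((univ.filter (fun i => k i = 0)) ∪ (univ.filter (fun i => k i = 1)))
        ∪ (univ.filter (fun i => k i = 5)) := by
    ext i
    simp only [mem_union, mem_filter, mem_univ, true_and, iff_true]
    have := h i; tauto
  conv_lhs => rw [hU]
  rw [Finset.prod_union, Finset.prod_union]
  · congr 1
    · congr 1
      · rw [Finset.prod_congr rfl (fun i hi => by rw [(mem_filter.1 hi).2]), Finset.prod_const]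
      · rw [Finset.prod_congr rfl (fun i hi => by rw [(mem_filter.1 hi).2]), Finset.prod_const]
    · rw [Finset.prod_congr rfl (fun i hi => by rw [(mem_filter.1 hi).2]), Finset.prod_const]
  · simp only [Finset.disjoint_left, mem_filter, mem_univ, true_and]
    rintro i h1 h2; rw [h1] at h2; exact absurd h2 (by decide)
  · simp only [Finset.disjoint_left, mem_union, mem_filter, mem_univ, true_and]
    rintro i h1 h2
    rcases h1 with h1 | h1 <;> rw [h1] at h2 <;> exact absurd h2 (by decide)


lemma sum_partition {n : ℕ} (k : Fin n → ZMod 6)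
    (h : ∀ i, k i = 0 ∨ k i = 1 ∨ k i = 5) :
    ∑ i, k i = (univ.filter (fun i => k i = 0)).card • (0 : ZMod 6)
      + (univ.filter (fun i => k i = 1)).card • (1 : ZMod 6)
      + (univ.filter (fun i => k i = 5)).card • (5 : ZMod 6) := by
  have hU : (univ : Finset (Fin n)) =
      ((univ.filter (fun i => k i = 0)) ∪ (univ.filter (fun i => k i = 1)))
        ∪ (univ.filter (fun i => k i = 5)) := by
    ext i
    simp only [mem_union, mem_filter, mem_univ, true_and, iff_true]
    have := h i; tauto
  conv_lhs => rw [hU]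
  rw [Finset.sum_union, Finset.sum_union]
  · congr 1
    · congr 1
      · rw [Finset.sum_congr rfl (fun i hi => (mem_filter.1 hi).2), Finset.sum_const]
      · rw [Finset.sum_congr rfl (fun i hi => (mem_filter.1 hi).2), Finset.sum_const]
    · rw [Finset.sum_congr rfl (fun i hi => (mem_filter.1 hi).2), Finset.sum_const]
  · simp only [Finset.disjoint_left, mem_filter, mem_univ, true_and]
    rintro i h1 h2; rw [h1] at h2; exact absurd h2 (by decide)
  · simp only [Finset.disjoint_left, mem_union, mem_filter, mem_univ, true_and]
    rintro i h1 h2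
    rcases h1 with h1 | h1 <;> rw [h1] at h2 <;> exact absurd h2 (by decide)

theorem shared_data_through_order_five (f g : ZMod 6 → ℚ)
    (h0 : dft f 0 = dft g 0)
    (h2 : dft f 2 = 0) (h3 : dft f 3 = 0) (h4 : dft f 4 = 0)
    (h2' : dft g 2 = 0) (h3' : dft g 3 = 0) (h4' : dft g 4 = 0)
    (habs : ‖dft f 1‖ = ‖dft g 1‖) :
    ∀ n : ℕ, 1 ≤ n → n ≤ 5 → ∀ k : Fin n → ZMod 6, (∑ i, k i) = 0 →
      (∏ i, dft f (k i)) = ∏ i, dft g (k i) := by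
  intro n hn1 hn5 k hsum
  by_cases hall : ∀ i, k i = 0 ∨ k i = 1 ∨ k i = 5
  · have hab : (univ.filter (fun i => k i = 1)).card = (univ.filter (fun i => k i = 5)).card := by
      set a := (univ.filter (fun i => k i = 1)).card with ha
      set b := (univ.filter (fun i => k i = 5)).card with hb
      have hsum' := sum_partition k hall
      rw [hsum] at hsum'
      have hz : ((a + 5 * b : ℕ) : ZMod 6) = 0 := by
        rw [hsum', smul_zero, zero_add, ← ha, ← hb]
        push_cast
        simp [nsmul_eq_mul]
        ring
      have hdvd : (6 : ℕ) ∣ a + 5 * b := by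
        rwa [ZMod.natCast_eq_zero_iff] at hz
      have hle : a + b ≤ 5 := by
        have hdisj : Disjoint (univ.filter (fun i => k i = 1))
            (univ.filter (fun i => k i = 5)) := by
          simp only [Finset.disjoint_left, mem_filter, mem_univ, true_and]
          rintro i h1 h2; rw [h1] at h2; exact absurd h2 (by decide)
        calc a + b = ((univ.filter (fun i => k i = 1)) ∪ (univ.filter (fun i => k i = 5))).card := by
              rw [Finset.card_union_of_disjoint hdisj]
          _ ≤ (univ : Finset (Fin n)).card := Finset.card_le_card (Finset.subset_univ _)
          _ = n := Finset.card_univ.trans (Fintype.card_fin n)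
          _ ≤ 5 := hn5
      omega
    rw [prod_partition k hall (dft f), prod_partition k hall (dft g), h0,
      hab, mul_assoc, mul_assoc, ← mul_pow, ← mul_pow, key_prod f g habs]
  · push_neg at hall
    obtain ⟨i, hi0, hi1, hi5⟩ := hall
    have hcase : ∀ x : ZMod 6, x ≠ 0 → x ≠ 1 → x ≠ 5 → x = 2 ∨ x = 3 ∨ x = 4 := by decide
    have hf : dft f (k i) = 0 := by
      rcases hcase (k i) hi0 hi1 hi5 with h | h | h <;> rw [h]
      exacts [h2, h3, h4]
    have hg : dft g (k i) = 0 := by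
      rcases hcase (k i) hi0 hi1 hi5 with h | h | h <;> rw [h]
      exacts [h2', h3', h4']
    rw [Finset.prod_eq_zero (Finset.mem_univ i) hf, Finset.prod_eq_zero (Finset.mem_univ i) hg]
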